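/- Suppose G is cyclic. Then for every finite ℤ_p[G]-module M, the χ-part and the χ-quotient of M have the same cardinality: #M^χ = #M_χ. -/

import Mathlib

/- STATEMENT 7: setup as before.  Suppose `G` is cyclic.  For every finite
`ℤ_p[G]`-module `M`, the χ-part `M^χ` and the χ-quotient
`M_χ = M ⊗_{ℤ_p[G]} ℤ_p[χ] ≅ M/I_χM` have the same cardinality. -/

open scoped Classical
noncomputable section

variable (p : ℕ) [Fact p.Prime] (G : Type) [CommGroup G]
  (χ : G →* AlgebraicClosure ℚ_[p])

/-- `ℤ_p[χ]`, the subring generated over `ℤ_p` by the values of `χ`. -/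
def Zchi : Subalgebra ℤ_[p] (AlgebraicClosure ℚ_[p]) := Algebra.adjoin ℤ_[p] (Set.range χ)

/-- `χ` with values in `ℤ_p[χ]`. -/
def chiRes : G →* (Zchi p G χ) where
  toFun g := ⟨χ g, Algebra.subset_adjoin ⟨g, rfl⟩⟩
  map_one' := by ext; simp
  map_mul' a b := by ext; simp

/-- The `ℤ_p`-algebra map `ℤ_p[G] → ℤ_p[χ]` induced by `χ`. -/
def Phi : MonoidAlgebra ℤ_[p] G →ₐ[ℤ_[p]] (Zchi p G χ) :=
  MonoidAlgebra.lift ℤ_[p] _ G (chiRes p G χ)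

/-- The ideal `I_χ`, kernel of `ℤ_p[G] → ℤ_p[χ]`. -/
def Ichi : Ideal (MonoidAlgebra ℤ_[p] G) := RingHom.ker (Phi p G χ)

/-- The χ-part `M^χ` of a `ℤ_p[G]`-module `M`: the submodule annihilated by `I_χ`. -/
def chiPart (M : Type) [AddCommGroup M] [Module (MonoidAlgebra ℤ_[p] G) M] :
    Submodule (MonoidAlgebra ℤ_[p] G) M :=
  Submodule.torsionBySet _ M (Ichi p G χ)

/- Since `G` is cyclic, `ℤ_p[G]` is a quotient of `ℤ_p[X]`, and `ℤ_p[χ] = ℤ_p[ζ]` with `ζ` the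
value of `χ` on a generator. As `ζ` is integral over the integrally closed ring `ℤ_p`, the kernel
of `ℤ_p[X] → ℤ_p[ζ]` is generated by the minimal polynomial of `ζ`, so `I_χ = (a)` is principal.
Then `M^χ` and `M_χ = M/aM` are the kernel and cokernel of multiplication by `a` on the finite
module `M`, which have the same cardinality. -/

theorem LinearMap.card_ker_eq_card_quotient_range {R M : Type*} [Ring R] [AddCommGroup M]
    [Module R M] [Finite M] (f : M →ₗ[R] M) :
    Nat.card (ker f) = Nat.card (M ⧸ range f) := by
  have h := (ker f).card_eq_card_quotient_mul_card.symm.trans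
    (range f).card_eq_card_quotient_mul_card
  rw [Nat.card_congr f.quotKerEquivRange.toEquiv, mul_comm] at h
  exact Nat.eq_of_mul_eq_mul_left Nat.card_pos h

theorem Submodule.card_torsionBySet_eq_card_quotient_smul_top {R M : Type*} [CommRing R]
    [AddCommGroup M] [Module R M] [Finite M] {I : Ideal R} (hI : I.IsPrincipal) :
    Nat.card (torsionBySet R M I) = Nat.card (M ⧸ I • (⊤ : Submodule R M)) := by
  obtain ⟨a, rfl⟩ := hI
  rw [torsionBySet_span_singleton_eq, ← Ideal.span, ideal_span_singleton_smul, pointwise_smul_def,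
    map_top]
  exact (DistribSMul.toLinearMap R M a).card_ker_eq_card_quotient_range

theorem MonoidAlgebra.aeval_of_surjective {R G : Type*} [CommSemiring R] [Monoid G] {g : G}
    (hg : ∀ x, x ∈ Submonoid.powers g) :
    Function.Surjective (Polynomial.aeval (R := R) (of R G g)) := by
  intro f
  induction f using MonoidAlgebra.induction_on with
  | of x =>
    obtain ⟨k, rfl⟩ := hg x
    exact ⟨Polynomial.X ^ k, by simp⟩
  | add f₁ f₂ h₁ h₂ =>
    obtain ⟨q₁, rfl⟩ := h₁
    obtain ⟨q₂, rfl⟩ := h₂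
    exact ⟨q₁ + q₂, map_add _ _ _⟩
  | smul r f h =>
    obtain ⟨q, rfl⟩ := h
    exact ⟨r • q, map_smul _ _ _⟩

instance Zchi.isTorsionFree : Module.IsTorsionFree ℤ_[p] (Zchi p G χ) :=
  have : FaithfulSMul ℤ_[p] (AlgebraicClosure ℚ_[p]) := .trans ℤ_[p] ℚ_[p] _
  .of_faithfulSMul (Zchi p G χ) ℤ_[p] (AlgebraicClosure ℚ_[p])

theorem isIntegral_chiRes [Finite G] (g : G) : IsIntegral ℤ_[p] (chiRes p G χ g) :=
  .of_pow Nat.card_pos (by rw [← map_pow, pow_card_eq_one', map_one]; exact isIntegral_one)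

theorem Ichi_isPrincipal [Finite G] [IsCyclic G] : (Ichi p G χ).IsPrincipal := by
  obtain ⟨g, hg⟩ := IsCyclic.exists_monoid_generator (α := G)
  let ψ := Polynomial.aeval (R := ℤ_[p]) (MonoidAlgebra.of ℤ_[p] G g)
  have hcomp : (Phi p G χ).comp ψ = Polynomial.aeval (chiRes p G χ g) :=
    Polynomial.algHom_ext (by simp [ψ, Phi])
  have hcomap : (Ichi p G χ).comap ψ = Ideal.span {minpoly ℤ_[p] (chiRes p G χ g)} := by
    rw [← minpoly.ker_eval (isIntegral_chiRes p G χ g), ← hcomp]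
    rfl
  have : ((Ichi p G χ).comap ψ).IsPrincipal := hcomap ▸ ⟨_, rfl⟩
  exact Ideal.IsPrincipal.of_comap ψ (MonoidAlgebra.aeval_of_surjective hg) _

theorem statement7 [Fintype G] [IsCyclic G]
    (M : Type) [AddCommGroup M] [Module (MonoidAlgebra ℤ_[p] G) M] [Finite M] :
    Nat.card (chiPart p G χ M) =
      Nat.card (M ⧸ (Ichi p G χ • (⊤ : Submodule (MonoidAlgebra ℤ_[p] G) M))) :=
  Submodule.card_torsionBySet_eq_card_quotient_smul_top (Ichi_isPrincipal p G χ)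

end
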